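/- Let k be a positive integer and let p be a pattern containing exactly k distinct variables. If p has length at least 4^k, then p is 2-avoidable; that is, there exist infinitely many words over a 2-letter alphabet having no factor that is an instance of p. -/

import Mathlib

/-- A word `w` is an instance of the pattern `p` if there is a non-erasing
substitution (equivalently, a non-erasing monoid morphism on free monoids)
sending `p` to `w`. -/
def IsInstance {Δ α : Type*} (p : List Δ) (w : List α) : Prop :=
  ∃ f : Δ → List α, (∀ v, f v ≠ []) ∧ (p.map f).flatten = w

/-- A word `w` avoids the pattern `p` if no factor of `w` is an instance of `p`. -/
def Avoids {Δ α : Type*} (w : List α) (p : List Δ) : Prop :=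
  ∀ x : List α, x <:+: w → ¬ IsInstance p x

/-!
Let `w` be a word of length at least `4 ^ k` over `k` letters. Either every factor of `w` of
length `4 ^ (k - 1)` contains every letter of `w`, and then four disjoint such factors show that
each letter occurs at least four times, or one of them misses a letter and induction applies to
it. So the pattern has a nonempty factor `q` in which every variable occurs at least four times,
and it suffices to avoid `q`.

If `q` has a single variable, every instance of `q` contains a cube, and the prefixes of the
Thue–Morse word avoid cubes since that word is overlap-free.

Otherwise let `aₙ` be the number of binary words of length `n` avoiding `q` and `cₗ` the number of
instances of `q` of length `ℓ`. Appending a letter to an avoiding word either keeps it avoiding or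
creates an instance as a suffix, so `2 aₙ ≤ aₙ₊₁ + ∑ₗ cₗ aₙ₊₁₋ₗ`. An instance is determined by the
images of the variables, so `∑ₗ cₗ xˡ` is at most a product over the variables of
`∑ₗ 2ˡ x^(4ℓ)`; at `x = 4 / 7` this gives `∑ₗ cₗ xˡ ≤ (512 / 1889) ^ 2 ≤ 1 / 7`, which forces
`aₙ₊₁ ≥ 7 / 4 · aₙ` by induction, so `aₙ > 0` for every `n`.
-/

section

variable {Δ α : Type*}

theorem IsInstance.ne_nil {p : List Δ} {w : List α} (hp : p ≠ []) (h : IsInstance p w) :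
    w ≠ [] := by
  obtain ⟨f, hf, rfl⟩ := h
  obtain ⟨v, p, rfl⟩ := List.exists_cons_of_ne_nil hp
  simp [hf v]

theorem avoids_nil {p : List Δ} (hp : p ≠ []) : Avoids ([] : List α) p :=
  fun _ hx h => h.ne_nil hp (List.eq_nil_of_infix_nil hx)

theorem Avoids.of_infix {p : List Δ} {w x : List α} (h : Avoids w p) (hx : x <:+: w) :
    Avoids x p :=
  fun y hy => h y (hy.trans hx)

theorem Avoids.of_infix_pattern {p q : List Δ} {w : List α} (h : Avoids w q) (hq : q <:+: p) :
    Avoids w p := by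
  rintro x hx ⟨f, hf, rfl⟩
  obtain ⟨s, t, rfl⟩ := hq
  refine h _ (List.IsInfix.trans ?_ hx) ⟨f, hf, rfl⟩
  exact ⟨(s.map f).flatten, (t.map f).flatten, by simp⟩

theorem le_count_of_forall_infix_mem [DecidableEq α] {v : α} {n : ℕ} :
    ∀ (c : ℕ) (w : List α), c * n ≤ w.length → (∀ B, B <:+: w → B.length = n → v ∈ B) →
      c ≤ w.count v
  | 0, _, _, _ => Nat.zero_le _
  | c + 1, w, hlen, hmem => by
    have hhead : v ∈ w.take n :=
      hmem _ (List.take_prefix n w).isInfix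
        (List.length_take_of_le ((Nat.le_mul_of_pos_left n c.succ_pos).trans hlen))
    have htail : c ≤ (w.drop n).count v :=
      le_count_of_forall_infix_mem c _ (by rw [List.length_drop, add_mul] at *; omega)
        fun B hB => hmem B (hB.trans (List.drop_suffix n w).isInfix)
    rw [← List.take_append_drop n w, List.count_append]
    have := List.count_pos_iff.2 hhead
    omega

theorem exists_infix_le_count_of_pow_le [DecidableEq α] {c : ℕ} (hc : 0 < c) :
    ∀ (k : ℕ) (w : List α), w.toFinset.card ≤ k → c ^ k ≤ w.length →
      ∃ q, q ≠ [] ∧ q <:+: w ∧ ∀ v ∈ q, c ≤ q.count v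
  | 0, w, hcard, hlen => by
    obtain ⟨a, ha⟩ := List.exists_mem_of_length_pos (pow_zero c ▸ hlen)
    exact absurd (Finset.card_pos.2 ⟨a, List.mem_toFinset.2 ha⟩) (by omega)
  | k + 1, w, hcard, hlen => by
    by_cases hall : ∀ v ∈ w, ∀ B, B <:+: w → B.length = c ^ k → v ∈ B
    · refine ⟨w, ?_, List.infix_rfl, fun v hv => ?_⟩
      · rintro rfl
        exact (pow_pos hc _).not_ge hlen
      · exact le_count_of_forall_infix_mem c w (by rw [← pow_succ']; exact hlen) (hall v hv)
    · push Not at hall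
      obtain ⟨v, hvw, B, hBw, hBlen, hvB⟩ := hall
      have hBcard : B.toFinset.card ≤ k := by
        have hsub : B.toFinset ⊆ w.toFinset.erase v := fun x hx => by
          rw [List.mem_toFinset] at hx
          exact Finset.mem_erase.2 ⟨by rintro rfl; exact hvB hx,
            List.mem_toFinset.2 (hBw.subset hx)⟩
        have := Finset.card_le_card hsub
        rw [Finset.card_erase_of_mem (List.mem_toFinset.2 hvw)] at this
        omega
      obtain ⟨q, hq, hqB, hcount⟩ :=
        exists_infix_le_count_of_pow_le hc k B hBcard hBlen.ge
      exact ⟨q, hq, hqB.trans hBw, hcount⟩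

def thueMorse : ℕ → Fin 2
  | 0 => 0
  | n + 1 => thueMorse ((n + 1) / 2) + if (n + 1) % 2 = 0 then 0 else 1
decreasing_by omega

theorem thueMorse_two_mul (m : ℕ) : thueMorse (2 * m) = thueMorse m := by
  cases m with
  | zero => rfl
  | succ m =>
    rw [show 2 * (m + 1) = (2 * m + 1) + 1 by ring, thueMorse]
    simp [show (2 * m + 1 + 1) / 2 = m + 1 by omega, show (2 * m + 1 + 1) % 2 = 0 by omega]

theorem thueMorse_two_mul_add_one (m : ℕ) : thueMorse (2 * m + 1) = thueMorse m + 1 := by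
  rw [thueMorse]
  simp [show (2 * m + 1) / 2 = m by omega]

theorem thueMorse_not_triple (n : ℕ) :
    ¬ (thueMorse n = thueMorse (n + 1) ∧ thueMorse (n + 1) = thueMorse (n + 2)) := by
  obtain ⟨m, rfl | rfl⟩ := Nat.even_or_odd' n
  · rintro ⟨h, -⟩
    rw [thueMorse_two_mul_add_one, thueMorse_two_mul] at h
    grind
  · rintro ⟨-, h⟩
    rw [show 2 * m + 1 + 1 = 2 * (m + 1) by ring, show 2 * m + 1 + 2 = 2 * (m + 1) + 1 by ring,
      thueMorse_two_mul, thueMorse_two_mul_add_one] at h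
    grind

/-- `f` has an overlap `a x a x a` with `(a x).length = q` at position `i`. -/
def IsOverlapAt {β : Type*} (f : ℕ → β) (i q : ℕ) : Prop :=
  ∀ j ≤ q, f (i + j) = f (i + j + q)

theorem IsOverlapAt.thueMorse_half {i r : ℕ} (h : IsOverlapAt thueMorse i (2 * r)) :
    IsOverlapAt thueMorse (i / 2) r := by
  intro j hj
  by_cases hi : i ≤ 2 * (i / 2 + j)
  · have := h (2 * (i / 2 + j) - i) (by omega)
    rwa [show i + (2 * (i / 2 + j) - i) = 2 * (i / 2 + j) by omega,
      show 2 * (i / 2 + j) + 2 * r = 2 * (i / 2 + j + r) by ring,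
      thueMorse_two_mul, thueMorse_two_mul] at this
  · have := h (2 * (i / 2 + j) + 1 - i) (by omega)
    rwa [show i + (2 * (i / 2 + j) + 1 - i) = 2 * (i / 2 + j) + 1 by omega,
      show 2 * (i / 2 + j) + 1 + 2 * r = 2 * (i / 2 + j + r) + 1 by ring,
      thueMorse_two_mul_add_one, thueMorse_two_mul_add_one, add_left_inj] at this

theorem not_isOverlapAt_thueMorse_odd (i r : ℕ) : ¬ IsOverlapAt thueMorse i (2 * r + 1) := by
  intro h
  have shift : ∀ m, i ≤ 2 * m → 2 * m ≤ i + (2 * r + 1) →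
      thueMorse m = thueMorse (m + r) + 1 := by
    intro m h₁ h₂
    have := h (2 * m - i) (by omega)
    rwa [show i + (2 * m - i) = 2 * m by omega,
      show 2 * m + (2 * r + 1) = 2 * (m + r) + 1 by ring,
      thueMorse_two_mul, thueMorse_two_mul_add_one] at this
  have shift' : ∀ m, i ≤ 2 * m → 2 * m + 1 ≤ i + (2 * r + 1) →
      thueMorse m + 1 = thueMorse (m + r + 1) := by
    intro m h₁ h₂
    have := h (2 * m + 1 - i) (by omega)
    rwa [show i + (2 * m + 1 - i) = 2 * m + 1 by omega,
      show 2 * m + 1 + (2 * r + 1) = 2 * (m + r + 1) by ring,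
      thueMorse_two_mul, thueMorse_two_mul_add_one] at this
  -- The letters at `2m` and `2m + 1` always differ; an odd period moves them to `2(m+r) + 1` and
  -- `2(m+r+1)`, which straddle two blocks, so these two blocks must start with the same letter.
  have equal : ∀ m, i ≤ 2 * m → 2 * m + 1 ≤ i + (2 * r + 1) →
      thueMorse (m + r) = thueMorse (m + r + 1) := by
    intro m h₁ h₂
    have key : ∀ a b c : Fin 2, a = b + 1 → a + 1 = c → b = c := by decide
    exact key _ _ _ (shift m h₁ (by omega)) (shift' m h₁ h₂)
  obtain ⟨m, hm⟩ : ∃ m, i ≤ 2 * m ∧ 2 * m ≤ i + 1 := ⟨(i + 1) / 2, by omega, by omega⟩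
  rcases Nat.lt_or_ge r 2 with hr | hr
  · interval_cases r
    · exact thueMorse_not_triple i ⟨h 0 (by omega), by simpa using h 1 le_rfl⟩
    · have key : ∀ a b : Fin 2, a = b + 1 → a ≠ b := by decide
      exact key _ _ (shift (m + 1) (by omega) (by omega)) (equal m (by omega) (by omega))
  · exact thueMorse_not_triple (m + r)
      ⟨equal m (by omega) (by omega),
        by simpa [add_right_comm] using equal (m + 1) (by omega) (by omega)⟩

theorem not_isOverlapAt_thueMorse (i : ℕ) {q : ℕ} (hq : 0 < q) :
    ¬ IsOverlapAt thueMorse i q := by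
  induction q using Nat.strong_induction_on generalizing i with
  | _ q ih =>
    obtain ⟨r, rfl | rfl⟩ := Nat.even_or_odd' q
    · exact fun h => ih r (by omega) (i / 2) (by omega) h.thueMorse_half
    · exact not_isOverlapAt_thueMorse_odd i r

theorem exists_getElem_eq_of_infix_map_range {β : Type*} {f : ℕ → β} {N : ℕ} {x : List β}
    (hx : x <:+: (List.range N).map f) : ∃ i, ∀ j (hj : j < x.length), x[j] = f (i + j) := by
  obtain ⟨s, t, hst⟩ := hx
  refine ⟨s.length, fun j hj => ?_⟩
  have hlt : s.length + j < ((List.range N).map f).length := by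
    rw [← hst]; simp; omega
  have := List.getElem_of_eq hst.symm hlt
  simp only [List.getElem_map, List.getElem_range] at this
  rw [this, List.getElem_append_left (by simp; omega), List.getElem_append_right (by omega)]
  simp

theorem avoids_thueMorse_cube (N : ℕ) (v : Δ) :
    Avoids ((List.range N).map thueMorse) [v, v, v] := by
  rintro x hx ⟨f, hf, rfl⟩
  obtain ⟨i, hi⟩ := exists_getElem_eq_of_infix_map_range hx
  set X := f v
  have hX : 0 < X.length := List.length_pos_iff.2 (hf v)
  refine not_isOverlapAt_thueMorse i hX fun j hj => ?_
  have hcube : ([v, v, v].map f).flatten = X ++ (X ++ X) := by simp [X]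
  simp only [hcube, List.length_append] at hi
  have hshift : (X ++ (X ++ X))[j + X.length]'(by simp; omega) =
      (X ++ (X ++ X))[j]'(by simp; omega) := by
    grind
  rw [add_assoc, ← hi j (by omega), ← hi (j + X.length) (by omega), hshift]

theorem avoids_thueMorse_of_card_toFinset_le_one [DecidableEq Δ] {q : List Δ}
    (hq : q.toFinset.card ≤ 1) (hlen : 3 ≤ q.length) (N : ℕ) :
    Avoids ((List.range N).map thueMorse) q := by
  obtain ⟨v, hv⟩ := List.exists_mem_of_length_pos (by omega : 0 < q.length)
  have hrep : q = List.replicate q.length v := List.eq_replicate_of_mem fun u hu =>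
    Finset.card_le_one.1 hq u (List.mem_toFinset.2 hu) v (List.mem_toFinset.2 hv)
  refine (avoids_thueMorse_cube N v).of_infix_pattern ?_
  rw [hrep]
  exact List.infix_replicate_iff.2 ⟨hlen, rfl⟩

theorem Avoids.exists_eq_append_instance {p : List Δ} {w : List α} {b : α} (hp : p ≠ [])
    (hw : Avoids w p) (hwb : ¬ Avoids (w ++ [b]) p) :
    ∃ s x, w ++ [b] = s ++ x ∧ IsInstance p x ∧ x ≠ [] ∧ Avoids s p := by
  simp only [Avoids, not_forall, not_not] at hwb
  obtain ⟨x, hx, hinst⟩ := hwb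
  rcases List.infix_concat_iff.1 hx with ⟨s, hs⟩ | hxw
  · have hx : x ≠ [] := hinst.ne_nil hp
    have hlen : s.length ≤ w.length := by
      have hlen' := congrArg List.length hs
      simp only [List.length_append, List.length_singleton] at hlen'
      have := List.length_pos_iff.2 hx
      omega
    refine ⟨s, x, hs.symm, hinst, hx, hw.of_infix ?_⟩
    exact (List.prefix_of_prefix_length_le ⟨x, hs⟩ (List.prefix_append w [b]) hlen).isInfix
  · exact absurd hinst (hw x hxw)

section Counting

open Finset

theorem sum_biUnion_of_length_eq [DecidableEq α] {K : Type*} [CommSemiring K]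
    {s : ℕ → Finset (List α)} (hs : ∀ ℓ, ∀ x ∈ s ℓ, x.length = ℓ) (I : Finset ℕ) (f : ℕ → K) :
    ∑ x ∈ I.biUnion s, f x.length = ∑ ℓ ∈ I, (#(s ℓ) : K) * f ℓ := by
  rw [sum_biUnion fun ℓ _ ℓ' _ hne => disjoint_left.2 fun x hx hx' =>
    hne ((hs ℓ x hx).symm.trans (hs ℓ' x hx'))]
  refine sum_congr rfl fun ℓ _ => ?_
  rw [sum_congr rfl fun x hx => by rw [hs ℓ x hx], sum_const, nsmul_eq_mul]

variable [Fintype α]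

variable (α) in
def wordsOfLength (n : ℕ) : Finset (List α) :=
  (univ : Finset (Fin n → α)).map ⟨List.ofFn, List.ofFn_injective⟩

@[simp]
theorem mem_wordsOfLength {n : ℕ} {w : List α} : w ∈ wordsOfLength α n ↔ w.length = n := by
  simp only [wordsOfLength, mem_map, mem_univ, true_and, Function.Embedding.coeFn_mk]
  refine ⟨fun ⟨g, hg⟩ => hg ▸ List.length_ofFn, fun h => ?_⟩
  subst h
  exact ⟨fun i => w[i], List.ofFn_getElem⟩

theorem card_wordsOfLength (n : ℕ) : #(wordsOfLength α n) = Fintype.card α ^ n := by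
  simp [wordsOfLength]

variable (α) in
open Classical in
noncomputable def avoidingWords (p : List Δ) (n : ℕ) : Finset (List α) :=
  (wordsOfLength α n).filter (Avoids · p)

variable (α) in
open Classical in
noncomputable def instancesOfLength (p : List Δ) (n : ℕ) : Finset (List α) :=
  (wordsOfLength α n).filter (IsInstance p)

@[simp]
theorem mem_avoidingWords {p : List Δ} {n : ℕ} {w : List α} :
    w ∈ avoidingWords α p n ↔ w.length = n ∧ Avoids w p := by
  simp [avoidingWords]

@[simp]
theorem mem_instancesOfLength {p : List Δ} {n : ℕ} {w : List α} :
    w ∈ instancesOfLength α p n ↔ w.length = n ∧ IsInstance p w := by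
  simp [instancesOfLength]

/-- Each extension `w ++ [b]` of an avoiding word either avoids `p` or ends with an instance of `p`
preceded by an avoiding word. -/
theorem card_mul_card_avoidingWords_le {p : List Δ} (hp : p ≠ []) (n : ℕ) :
    Fintype.card α * #(avoidingWords α p n) ≤ #(avoidingWords α p (n + 1)) +
      ∑ ℓ ∈ Icc 1 (n + 1), #(instancesOfLength α p ℓ) * #(avoidingWords α p (n + 1 - ℓ)) := by
  classical
  let extensions := (avoidingWords α p n ×ˢ univ).image fun wb : List α × α => wb.1 ++ [wb.2]
  have hcard : #extensions = Fintype.card α * #(avoidingWords α p n) := by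
    rw [card_image_of_injective _ fun wb wb' h => ?_, card_product, card_univ, mul_comm]
    obtain ⟨h₁, h₂⟩ := List.append_inj' h rfl
    exact Prod.ext h₁ (List.singleton_inj.1 h₂)
  have hsub : extensions ⊆ avoidingWords α p (n + 1) ∪ (Icc 1 (n + 1)).biUnion fun ℓ =>
      (instancesOfLength α p ℓ ×ˢ avoidingWords α p (n + 1 - ℓ)).image
        fun xs => xs.2 ++ xs.1 := by
    simp only [extensions, image_subset_iff, mem_product, mem_avoidingWords, mem_univ, and_true]
    rintro ⟨w, b⟩ ⟨hwlen, hw⟩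
    by_cases hwb : Avoids (w ++ [b]) p
    · exact mem_union_left _ (mem_avoidingWords.2 ⟨by simp [hwlen], hwb⟩)
    obtain ⟨s, x, hsx, hx, hxne, hs⟩ := hw.exists_eq_append_instance hp hwb
    have hlen := congrArg List.length hsx
    have := List.length_pos_iff.2 hxne
    simp only [List.length_append, List.length_singleton, hwlen] at hlen
    refine mem_union_right _ (mem_biUnion.2 ⟨x.length, mem_Icc.2 ⟨by omega, by omega⟩, ?_⟩)
    exact mem_image.2 ⟨(x, s), mem_product.2 ⟨mem_instancesOfLength.2 ⟨rfl, hx⟩,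
      mem_avoidingWords.2 ⟨show s.length = _ by omega, hs⟩⟩, hsx.symm⟩
  calc Fintype.card α * #(avoidingWords α p n) = #extensions := hcard.symm
    _ ≤ _ := card_le_card hsub
    _ ≤ _ := card_union_le _ _
    _ ≤ _ := by
      gcongr
      refine card_biUnion_le.trans (sum_le_sum fun ℓ _ => ?_)
      exact card_image_le.trans (card_product _ _).le

theorem sum_card_instancesOfLength_mul_pow_le [DecidableEq Δ] {K : Type*} [CommSemiring K]
    [PartialOrder K] [IsOrderedRing K] (p : List Δ) (N : ℕ) {y : K} (hy : 0 ≤ y) :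
    ∑ ℓ ∈ Icc 1 N, (#(instancesOfLength α p ℓ) : K) * y ^ ℓ ≤
      ∏ v ∈ p.toFinset, ∑ l ∈ Icc 1 N, (Fintype.card α : K) ^ l * y ^ (p.count v * l) := by
  classical
  let V := p.toFinset
  let W := (Icc 1 N).biUnion (wordsOfLength α)
  let subst : (V → List α) → List α := fun g =>
    (p.map fun v => if h : v ∈ V then g ⟨v, h⟩ else []).flatten
  have hlen : ∀ g, (subst g).length = ∑ v : V, p.count (v : Δ) * (g v).length := by
    intro g
    rw [List.length_flatten, List.map_map, sum_list_map_count, ← sum_coe_sort]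
    refine sum_congr rfl fun v _ => ?_
    simp
  have hsub : (Icc 1 N).biUnion (instancesOfLength α p) ⊆
      (Fintype.piFinset fun _ : V => W).image subst := by
    intro u hu
    obtain ⟨ℓ, hℓ, hu⟩ := mem_biUnion.1 hu
    obtain ⟨rfl, f, hf, rfl⟩ := mem_instancesOfLength.1 hu
    refine mem_image.2 ⟨fun v => f v, Fintype.mem_piFinset.2 fun v => ?_, ?_⟩
    · have hle := (List.sublist_flatten_of_mem (List.mem_map_of_mem (f := f)
        (List.mem_toFinset.1 v.2))).length_le
      exact mem_biUnion.2 ⟨(f v).length, mem_Icc.2 ⟨List.length_pos_iff.2 (hf v),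
        hle.trans (mem_Icc.1 hℓ).2⟩, mem_wordsOfLength.2 rfl⟩
    · exact congrArg List.flatten
        (List.map_congr_left fun v hv => dif_pos (List.mem_toFinset.2 hv))
  calc ∑ ℓ ∈ Icc 1 N, (#(instancesOfLength α p ℓ) : K) * y ^ ℓ
      = ∑ u ∈ (Icc 1 N).biUnion (instancesOfLength α p), y ^ u.length :=
        (sum_biUnion_of_length_eq (fun ℓ x hx => (mem_instancesOfLength.1 hx).1) _ _).symm
    _ ≤ ∑ u ∈ (Fintype.piFinset fun _ : V => W).image subst, y ^ u.length :=
        sum_le_sum_of_subset_of_nonneg hsub fun _ _ _ => pow_nonneg hy _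
    _ ≤ ∑ g ∈ Fintype.piFinset fun _ : V => W, y ^ (subst g).length :=
        sum_image_le_of_nonneg fun _ _ => pow_nonneg hy _
    _ = ∑ g ∈ Fintype.piFinset fun _ : V => W,
          ∏ v : V, y ^ (p.count (v : Δ) * (g v).length) := by
        simp only [hlen, prod_pow_eq_pow_sum]
    _ = ∏ v : V, ∑ w ∈ W, y ^ (p.count (v : Δ) * w.length) :=
        (prod_univ_sum (fun _ : V => W) fun v w => y ^ (p.count (v : Δ) * w.length)).symm
    _ = ∏ v ∈ V, ∑ l ∈ Icc 1 N, (Fintype.card α : K) ^ l * y ^ (p.count v * l) := by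
        refine Eq.trans (prod_congr rfl fun v _ => ?_) (prod_coe_sort V _)
        rw [sum_biUnion_of_length_eq (fun ℓ x hx => mem_wordsOfLength.1 hx) _
          fun l => y ^ (p.count (v : Δ) * l)]
        simp only [card_wordsOfLength, Nat.cast_pow]

end Counting

section Growth

open Finset

variable {K : Type*} [CommRing K] [LinearOrder K] [IsStrictOrderedRing K] {a c : ℕ → K} {x : K}

theorem le_pow_mul_of_le_mul_succ {n : ℕ} (hx : 0 ≤ x) (h : ∀ j < n, a j ≤ x * a (j + 1)) :
    ∀ d j, j + d ≤ n → a j ≤ x ^ d * a (j + d)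
  | 0, j, _ => by simp
  | d + 1, j, hjd => calc
    a j ≤ x * a (j + 1) := h j (by omega)
    _ ≤ x * (x ^ d * a (j + 1 + d)) :=
      mul_le_mul_of_nonneg_left (le_pow_mul_of_le_mul_succ hx h d (j + 1) (by omega)) hx
    _ = x ^ (d + 1) * a (j + (d + 1)) := by ring_nf

theorem le_mul_succ_of_mul_le_add_sum {d γ : K} (ha : ∀ n, 0 ≤ a n) (hc : ∀ ℓ, 0 ≤ c ℓ)
    (hx : 0 ≤ x) (hγ : ∀ N, ∑ ℓ ∈ Icc 1 N, c ℓ * x ^ ℓ ≤ γ) (hdx : 1 + γ ≤ d * x)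
    (hrec : ∀ n, d * a n ≤ a (n + 1) + ∑ ℓ ∈ Icc 1 (n + 1), c ℓ * a (n + 1 - ℓ)) (n : ℕ) :
    a n ≤ x * a (n + 1) := by
  induction n using Nat.strong_induction_on with
  | _ n ih =>
  have hconv : x * ∑ ℓ ∈ Icc 1 (n + 1), c ℓ * a (n + 1 - ℓ) ≤ γ * a n := calc
    x * ∑ ℓ ∈ Icc 1 (n + 1), c ℓ * a (n + 1 - ℓ)
      ≤ ∑ ℓ ∈ Icc 1 (n + 1), c ℓ * x ^ ℓ * a n := by
        rw [mul_sum]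
        refine sum_le_sum fun ℓ hℓ => ?_
        obtain ⟨hℓ₁, hℓ₂⟩ := mem_Icc.1 hℓ
        have := le_pow_mul_of_le_mul_succ hx ih (ℓ - 1) (n + 1 - ℓ) (by omega)
        rw [show n + 1 - ℓ + (ℓ - 1) = n by omega] at this
        calc x * (c ℓ * a (n + 1 - ℓ)) ≤ x * (c ℓ * (x ^ (ℓ - 1) * a n)) := by
              gcongr; exact hc ℓ
          _ = c ℓ * x ^ (ℓ - 1 + 1) * a n := by ring
          _ = c ℓ * x ^ ℓ * a n := by rw [Nat.sub_add_cancel hℓ₁]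
    _ ≤ γ * a n := by rw [← sum_mul]; exact mul_le_mul_of_nonneg_right (hγ _) (ha n)
  have := mul_le_mul_of_nonneg_left (hrec n) hx
  have := mul_le_mul_of_nonneg_right hdx (ha n)
  linarith

end Growth

section Binary

open Finset

-- `2 * (4 / 7) ^ 4 = 512 / 2401`, and `∑_{l ≥ 1} (512 / 2401) ^ l = 512 / 1889`.
theorem sum_two_pow_mul_pow_le {m : ℕ} (hm : 4 ≤ m) (N : ℕ) :
    ∑ l ∈ Icc 1 N, (2 : ℚ) ^ l * (4 / 7) ^ (m * l) ≤ 512 / 1889 := calc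
  ∑ l ∈ Icc 1 N, (2 : ℚ) ^ l * (4 / 7) ^ (m * l)
      ≤ ∑ l ∈ Ico 1 (N + 1), (512 / 2401 : ℚ) ^ l := by
    rw [Ico_add_one_right_eq_Icc]
    refine sum_le_sum fun l _ => ?_
    calc (2 : ℚ) ^ l * (4 / 7) ^ (m * l) ≤ 2 ^ l * (4 / 7) ^ (4 * l) :=
          mul_le_mul_of_nonneg_left (pow_le_pow_of_le_one (by norm_num) (by norm_num)
            (Nat.mul_le_mul_right l hm)) (by positivity)
      _ = (512 / 2401) ^ l := by rw [pow_mul, ← mul_pow]; norm_num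
  _ ≤ (512 / 2401) ^ 1 / (1 - 512 / 2401) := geom_sum_Ico_le_of_lt_one (by norm_num) (by norm_num)
  _ = 512 / 1889 := by norm_num

theorem sum_card_instancesOfLength_mul_pow_le_one_div_seven [DecidableEq Δ] {p : List Δ}
    (hcount : ∀ v ∈ p, 4 ≤ p.count v) (hvars : 2 ≤ p.toFinset.card) (N : ℕ) :
    ∑ ℓ ∈ Icc 1 N, (#(instancesOfLength (Fin 2) p ℓ) : ℚ) * (4 / 7) ^ ℓ ≤ 1 / 7 := calc
  _ ≤ ∏ v ∈ p.toFinset, ∑ l ∈ Icc 1 N, (2 : ℚ) ^ l * (4 / 7) ^ (p.count v * l) := by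
    simpa using
      sum_card_instancesOfLength_mul_pow_le (α := Fin 2) p N (y := (4 / 7 : ℚ)) (by norm_num)
  _ ≤ (512 / 1889) ^ p.toFinset.card := by
    refine (prod_le_prod (fun _ _ => sum_nonneg fun _ _ => by positivity)
      fun v hv => sum_two_pow_mul_pow_le (hcount v (List.mem_toFinset.1 hv)) N).trans_eq ?_
    exact prod_const _
  _ ≤ (512 / 1889) ^ 2 := pow_le_pow_of_le_one (by norm_num) (by norm_num) hvars
  _ ≤ 1 / 7 := by norm_num

theorem avoidingWords_binary_nonempty [DecidableEq Δ] {p : List Δ}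
    (hcount : ∀ v ∈ p, 4 ≤ p.count v) (hvars : 2 ≤ p.toFinset.card) (n : ℕ) :
    (avoidingWords (Fin 2) p n).Nonempty := by
  have hp : p ≠ [] := by rintro rfl; simp at hvars
  have hgrowth := le_mul_succ_of_mul_le_add_sum
    (a := fun n => (#(avoidingWords (Fin 2) p n) : ℚ))
    (c := fun ℓ => #(instancesOfLength (Fin 2) p ℓ)) (d := 2) (x := 4 / 7) (by simp) (by simp)
    (by norm_num) (sum_card_instancesOfLength_mul_pow_le_one_div_seven hcount hvars) (by norm_num)
    fun n => by exact_mod_cast card_mul_card_avoidingWords_le (α := Fin 2) hp n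
  induction n with
  | zero => exact ⟨[], mem_avoidingWords.2 ⟨rfl, avoids_nil hp⟩⟩
  | succ n ih =>
    have hpos : (0 : ℚ) < #(avoidingWords (Fin 2) p n) := by exact_mod_cast ih.card_pos
    have hpos' : (0 : ℚ) < #(avoidingWords (Fin 2) p (n + 1)) := by linarith [hgrowth n]
    exact card_pos.1 (by exact_mod_cast hpos')

end Binary

theorem infinite_of_forall_exists_length_eq {S : Set (List α)}
    (h : ∀ n, ∃ w ∈ S, w.length = n) : S.Infinite := fun hS =>
  Set.infinite_univ ((hS.image List.length).subset fun n _ => h n)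

end

theorem avoid_two_of_length_ge_pow_general {Δ : Type*} [DecidableEq Δ]
    (k : ℕ) (p : List Δ)
    (hvars : p.toFinset.card = k) (hlen : 4 ^ k ≤ p.length) :
    {w : List (Fin 2) | Avoids w p}.Infinite := by
  obtain ⟨q, hq, hqp, hcount⟩ := exists_infix_le_count_of_pow_le four_pos k p hvars.le hlen
  refine infinite_of_forall_exists_length_eq fun n => ?_
  obtain ⟨w, hw, hwq⟩ : ∃ w : List (Fin 2), w.length = n ∧ Avoids w q := by
    rcases le_or_gt 2 q.toFinset.card with hmany | hone
    · obtain ⟨w, hw⟩ := avoidingWords_binary_nonempty hcount hmany n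
      exact ⟨w, mem_avoidingWords.1 hw⟩
    · obtain ⟨v, hv⟩ := List.exists_mem_of_ne_nil q hq
      have hqlen : 3 ≤ q.length := (hcount v hv).trans' (by norm_num) |>.trans List.count_le_length
      exact ⟨_, by simp, avoids_thueMorse_of_card_toFinset_le_one (by omega) hqlen n⟩
  exact ⟨w, hwq.of_infix_pattern hqp, hw⟩

theorem avoid_two_of_length_ge_pow {Δ : Type*} [DecidableEq Δ]
    (k : ℕ) (hk : 0 < k) (p : List Δ) (hp : p ≠ [])
    (hvars : p.toFinset.card = k) (hlen : 4 ^ k ≤ p.length) :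
    {w : List (Fin 2) | Avoids w p}.Infinite :=
  avoid_two_of_length_ge_pow_general k p hvars hlen
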